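/- Let A and U be unitary operators on a complex Hilbert space with A² = U² = I, and let Q(α, β) = −αA + 2U − βI for real α, β. If Q(α, β) is not invertible, i.e. 0 ∈ σ(−αA + 2U − βI), then |β| ≤ |α| + 2, |α| ≤ |β| + 2 and |α| + |β| ≥ 2; consequently the non-invertibility locus Σ = {(α, β) ∈ ℝ² : Q(α,β) not invertible} is a closed subset of Ω = {(α,β) : ||α| − |β|| ≤ 2, |α| + |β| ≥ 2}. -/
import Mathlib

section aux
variable {H : Type*} [NormedAddCommGroup H] [InnerProductSpace ℂ H] [CompleteSpace H]

lemma aux_norm_le_one {u : H →L[ℂ] H} (hu : u ∈ unitary (H →L[ℂ] H)) : ‖u‖ ≤ 1 :=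
  u.opNorm_le_bound zero_le_one fun x => by
    rw [u.norm_map_of_mem_unitary hu, one_mul]

lemma aux_isUnit {x v y : H →L[ℂ] H} (h1 : x * v = 1) (h2 : v * x = 1)
    (h : ‖v‖ * ‖y‖ < 1) : IsUnit (x + y) := by
  have hx : IsUnit x := isUnit_iff_exists.mpr ⟨v, h1, h2⟩
  have ht : ‖-(v * y)‖ < 1 := by
    rw [norm_neg]
    exact lt_of_le_of_lt (norm_mul_le v y) h
  have hu2 : IsUnit (1 + v * y) := by
    have := (Units.oneSub (-(v * y)) ht).isUnit
    simpa [sub_neg_eq_add] using this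
  have : x + y = x * (1 + v * y) := by
    rw [mul_add, mul_one, ← mul_assoc, h1, one_mul]
  rw [this]
  exact hx.mul hu2
end aux

theorem stmt16 {H : Type*} [NormedAddCommGroup H] [InnerProductSpace ℂ H] [CompleteSpace H]
    (A U : H →L[ℂ] H) (hA : A ∈ unitary (H →L[ℂ] H)) (hU : U ∈ unitary (H →L[ℂ] H))
    (hA2 : A * A = 1) (hU2 : U * U = 1) :
    (∀ α β : ℝ, ¬ IsUnit (-(α : ℂ) • A + (2 : ℂ) • U - (β : ℂ) • 1) →
        |(|α| - |β|)| ≤ 2 ∧ |α| ≤ |β| + 2 ∧ |β| ≤ |α| + 2 ∧ 2 ≤ |α| + |β|) ∧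
    IsClosed {p : ℝ × ℝ |
        ¬ IsUnit (-(p.1 : ℂ) • A + (2 : ℂ) • U - (p.2 : ℂ) • 1)} ∧
    {p : ℝ × ℝ | ¬ IsUnit (-(p.1 : ℂ) • A + (2 : ℂ) • U - (p.2 : ℂ) • 1)} ⊆
      {p : ℝ × ℝ | |(|p.1| - |p.2|)| ≤ 2 ∧ 2 ≤ |p.1| + |p.2|} := by
  have hAn : ‖A‖ ≤ 1 := aux_norm_le_one hA
  have hUn : ‖U‖ ≤ 1 := aux_norm_le_one hU
  have h1n : ‖(1 : H →L[ℂ] H)‖ ≤ 1 := ContinuousLinearMap.norm_id_le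
  -- the key invertibility criteria
  have key : ∀ α β : ℝ, ¬ IsUnit (-(α : ℂ) • A + (2 : ℂ) • U - (β : ℂ) • 1) →
      |α| ≤ |β| + 2 ∧ |β| ≤ |α| + 2 ∧ 2 ≤ |α| + |β| := by
    intro α β hQ
    refine ⟨?_, ?_, ?_⟩
    · -- if |α| > |β| + 2, invertible with base -α•A
      by_contra hc
      push_neg at hc
      have hα : (α : ℂ) ≠ 0 := by
        simp only [ne_eq, Complex.ofReal_eq_zero]
        intro h; rw [h] at hc; simp at hc; linarith [abs_nonneg β]
      apply hQ
      have heq : -(α : ℂ) • A + (2 : ℂ) • U - (β : ℂ) • 1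
          = (-(α : ℂ)) • A + ((2 : ℂ) • U - (β : ℂ) • 1) := by abel
      rw [heq]
      refine aux_isUnit (v := (-(α : ℂ))⁻¹ • A) ?_ ?_ ?_
      · rw [smul_mul_smul_comm, hA2]
        rw [mul_inv_cancel₀ (by simpa using hα), one_smul]
      · rw [smul_mul_smul_comm, hA2]
        rw [inv_mul_cancel₀ (by simpa using hα), one_smul]
      · have hv : ‖(-(α : ℂ))⁻¹ • A‖ ≤ |α|⁻¹ := by
          rw [norm_smul, norm_inv, norm_neg, Complex.norm_real, Real.norm_eq_abs]
          calc |α|⁻¹ * ‖A‖ ≤ |α|⁻¹ * 1 := by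
                exact mul_le_mul_of_nonneg_left hAn (by positivity)
            _ = |α|⁻¹ := mul_one _
        have hy : ‖(2 : ℂ) • U - (β : ℂ) • 1‖ ≤ 2 + |β| := by
          calc ‖(2 : ℂ) • U - (β : ℂ) • 1‖ ≤ ‖(2 : ℂ) • U‖ + ‖(β : ℂ) • 1‖ :=
                norm_sub_le _ _
            _ ≤ 2 + |β| := by
                rw [norm_smul, norm_smul, Complex.norm_real, Real.norm_eq_abs]
                have : ‖(2 : ℂ)‖ = 2 := by norm_num
                rw [this]
                nlinarith [norm_nonneg U, norm_nonneg (1 : H →L[ℂ] H), abs_nonneg β]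
        have hαpos : (0 : ℝ) < |α| := by linarith [abs_nonneg β]
        calc ‖(-(α : ℂ))⁻¹ • A‖ * ‖(2 : ℂ) • U - (β : ℂ) • 1‖
            ≤ |α|⁻¹ * (2 + |β|) := by
              apply mul_le_mul hv hy (norm_nonneg _) (by positivity)
          _ < 1 := by
              rw [inv_mul_lt_iff₀ hαpos, mul_one]; linarith
    · -- if |β| > |α| + 2, base -β•1
      by_contra hc
      push_neg at hc
      have hβ : (β : ℂ) ≠ 0 := by
        simp only [ne_eq, Complex.ofReal_eq_zero]
        intro h; rw [h] at hc; simp at hc; linarith [abs_nonneg α]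
      apply hQ
      have heq : -(α : ℂ) • A + (2 : ℂ) • U - (β : ℂ) • 1
          = (-(β : ℂ)) • 1 + (-(α : ℂ) • A + (2 : ℂ) • U) := by
        simp only [neg_smul]; abel
      rw [heq]
      refine aux_isUnit (v := (-(β : ℂ))⁻¹ • 1) ?_ ?_ ?_
      · rw [smul_mul_smul_comm, one_mul]
        rw [mul_inv_cancel₀ (by simpa using hβ), one_smul]
      · rw [smul_mul_smul_comm, one_mul]
        rw [inv_mul_cancel₀ (by simpa using hβ), one_smul]
      · have hv : ‖(-(β : ℂ))⁻¹ • (1 : H →L[ℂ] H)‖ ≤ |β|⁻¹ := by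
          rw [norm_smul, norm_inv, norm_neg, Complex.norm_real, Real.norm_eq_abs]
          calc |β|⁻¹ * ‖(1 : H →L[ℂ] H)‖ ≤ |β|⁻¹ * 1 :=
                mul_le_mul_of_nonneg_left h1n (by positivity)
            _ = |β|⁻¹ := mul_one _
        have hy : ‖-(α : ℂ) • A + (2 : ℂ) • U‖ ≤ |α| + 2 := by
          calc ‖-(α : ℂ) • A + (2 : ℂ) • U‖ ≤ ‖-(α : ℂ) • A‖ + ‖(2 : ℂ) • U‖ :=
                norm_add_le _ _
            _ ≤ |α| + 2 := by
                rw [norm_smul, norm_smul, norm_neg, Complex.norm_real, Real.norm_eq_abs]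
                have : ‖(2 : ℂ)‖ = 2 := by norm_num
                rw [this]
                nlinarith [norm_nonneg A, norm_nonneg U, abs_nonneg α]
        have hβpos : (0 : ℝ) < |β| := by linarith [abs_nonneg α]
        calc ‖(-(β : ℂ))⁻¹ • (1 : H →L[ℂ] H)‖ * ‖-(α : ℂ) • A + (2 : ℂ) • U‖
            ≤ |β|⁻¹ * (|α| + 2) :=
              mul_le_mul hv hy (norm_nonneg _) (by positivity)
          _ < 1 := by
              rw [inv_mul_lt_iff₀ hβpos, mul_one]; linarith
    · -- if |α| + |β| < 2, base 2•U
      by_contra hc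
      push_neg at hc
      apply hQ
      have heq : -(α : ℂ) • A + (2 : ℂ) • U - (β : ℂ) • 1
          = (2 : ℂ) • U + (-(α : ℂ) • A - (β : ℂ) • 1) := by abel
      rw [heq]
      refine aux_isUnit (v := (2 : ℂ)⁻¹ • U) ?_ ?_ ?_
      · rw [smul_mul_smul_comm, hU2]; norm_num
      · rw [smul_mul_smul_comm, hU2]; norm_num
      · have hv : ‖(2 : ℂ)⁻¹ • U‖ ≤ 2⁻¹ := by
          rw [norm_smul, norm_inv]
          have : ‖(2 : ℂ)‖ = 2 := by norm_num
          rw [this]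
          nlinarith [norm_nonneg U]
        have hy : ‖-(α : ℂ) • A - (β : ℂ) • 1‖ ≤ |α| + |β| := by
          calc ‖-(α : ℂ) • A - (β : ℂ) • 1‖ ≤ ‖-(α : ℂ) • A‖ + ‖(β : ℂ) • 1‖ :=
                norm_sub_le _ _
            _ ≤ |α| + |β| := by
                rw [norm_smul, norm_smul, norm_neg, Complex.norm_real, Complex.norm_real,
                  Real.norm_eq_abs, Real.norm_eq_abs]
                nlinarith [norm_nonneg A, norm_nonneg (1 : H →L[ℂ] H), abs_nonneg α, abs_nonneg β]
        calc ‖(2 : ℂ)⁻¹ • U‖ * ‖-(α : ℂ) • A - (β : ℂ) • 1‖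
            ≤ 2⁻¹ * (|α| + |β|) :=
              mul_le_mul hv hy (norm_nonneg _) (by norm_num)
          _ < 1 := by nlinarith
  refine ⟨?_, ?_, ?_⟩
  · intro α β hQ
    obtain ⟨h1, h2, h3⟩ := key α β hQ
    exact ⟨abs_sub_le_iff.mpr ⟨by linarith, by linarith⟩, h1, h2, h3⟩
  · have hopen : IsOpen {p : ℝ × ℝ | IsUnit (-(p.1 : ℂ) • A + (2 : ℂ) • U - (p.2 : ℂ) • 1)} := by
      have hcont : Continuous fun p : ℝ × ℝ =>
          -(p.1 : ℂ) • A + (2 : ℂ) • U - (p.2 : ℂ) • (1 : H →L[ℂ] H) := by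
        fun_prop
      exact Units.isOpen.preimage hcont
    simpa [Set.compl_setOf] using hopen.isClosed_compl
  · intro p hp
    obtain ⟨h1, h2, h3⟩ := key p.1 p.2 hp
    exact ⟨abs_sub_le_iff.mpr ⟨by linarith, by linarith⟩, h3⟩
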